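/- Let W be the group of 3×3 signed permutation matrices (the Weyl group of type B₃, of order 48) acting on (ZMod 4)³ by matrix-vector multiplication. Then there are no free orbits: every vector v ∈ (ZMod 4)³ is fixed by some non-identity element of W. -/

import Mathlib

def IsSignedPerm3 (M : Matrix (Fin 3) (Fin 3) (ZMod 4)) : Prop :=
  ∃ (σ : Equiv.Perm (Fin 3)) (ε : Fin 3 → ZMod 4),
    (∀ i, ε i = 1 ∨ ε i = -1) ∧ ∀ i j, M i j = if j = σ i then ε i else 0

/-!
A vector `v ∈ (ℤ/4)³` with a coordinate `v i ∈ {0, 2}` is fixed by the reflection negating that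
coordinate, since `-v i = v i`. Otherwise all coordinates are `±1`, so `v 1 = c * v 0` for a sign `c`,
and `v` is fixed by the signed transposition `e₀ ↦ c e₁`, `e₁ ↦ c e₀`.
-/

open Equiv Function

namespace Matrix

variable {n R : Type*} [DecidableEq n] [Ring R]

def signedPerm (σ : Perm n) (ε : n → R) : Matrix n n R :=
  of fun i j => if j = σ i then ε i else 0

@[simp]
theorem signedPerm_apply (σ : Perm n) (ε : n → R) (i j : n) :
    signedPerm σ ε i j = if j = σ i then ε i else 0 :=
  rfl

theorem signedPerm_eq_one_iff [Nontrivial R] {σ : Perm n} {ε : n → R} :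
    signedPerm σ ε = 1 ↔ σ = 1 ∧ ε = 1 := by
  constructor
  · intro h
    have hdiag (i : n) : (if i = σ i then ε i else 0) = 1 := by
      simpa using congrFun (congrFun h i) i
    have hσ (i : n) : σ i = i := by
      by_contra hi
      simpa [Ne.symm hi] using hdiag i
    refine ⟨Perm.ext hσ, funext fun i => ?_⟩
    simpa [hσ i] using hdiag i
  · rintro ⟨rfl, rfl⟩
    ext i j
    simp [one_apply, eq_comm]

variable [Fintype n]

@[simp]
theorem signedPerm_mulVec (σ : Perm n) (ε : n → R) (v : n → R) :
    signedPerm σ ε *ᵥ v = fun i => ε i * v (σ i) := by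
  funext i
  simp [mulVec, dotProduct, ite_mul]

theorem signedPerm_update_neg_one_mulVec_eq_self {v : n → R} {i : n} (hv : -v i = v i) :
    signedPerm 1 (update 1 i (-1)) *ᵥ v = v := by
  funext k
  rcases eq_or_ne k i with rfl | hk
  · simpa using hv
  · simp [hk]

theorem signedPerm_swap_mulVec_eq_self {v : n → R} {i j : n} {c : R}
    (hc : c * c = 1) (hv : v j = c * v i) :
    signedPerm (Equiv.swap i j) (fun k => if k = i ∨ k = j then c else 1) *ᵥ v = v := by
  funext k
  by_cases hki : k = i
  · subst hki
    simp [← mul_assoc, hv, hc]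
  by_cases hkj : k = j
  · subst hkj
    simp [hv]
  · simp [hki, hkj, swap_apply_of_ne_of_ne hki hkj]

end Matrix

namespace ZMod

theorem neg_eq_self_or_eq_one_or_eq_neg_one (x : ZMod 4) : -x = x ∨ x = 1 ∨ x = -1 := by
  revert x
  decide

theorem exists_sign_mul_eq {a b : ZMod 4} (ha : a = 1 ∨ a = -1) (hb : b = 1 ∨ b = -1) :
    ∃ c : ZMod 4, (c = 1 ∨ c = -1) ∧ b = c * a := by
  revert a b
  decide

end ZMod

open Matrix

theorem isSignedPerm3_signedPerm {σ : Perm (Fin 3)} {ε : Fin 3 → ZMod 4}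
    (hε : ∀ i, ε i = 1 ∨ ε i = -1) : IsSignedPerm3 (signedPerm σ ε) :=
  ⟨σ, ε, hε, fun _ _ => rfl⟩

theorem no_free_orbits_B3_mod4 (v : Fin 3 → ZMod 4) :
    ∃ M : Matrix (Fin 3) (Fin 3) (ZMod 4),
      IsSignedPerm3 M ∧ M ≠ 1 ∧ M.mulVec v = v := by
  have : Fact (1 < 4) := ⟨by norm_num⟩
  by_cases h : ∃ i, -v i = v i
  · obtain ⟨i, hi⟩ := h
    refine ⟨signedPerm 1 (update 1 i (-1)), isSignedPerm3_signedPerm fun k => ?_, ?_,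
      signedPerm_update_neg_one_mulVec_eq_self hi⟩
    · rcases eq_or_ne k i with rfl | hk <;> simp [*]
    · rw [Ne, signedPerm_eq_one_iff]
      intro ⟨_, hε⟩
      exact (by decide : (-1 : ZMod 4) ≠ 1) (by simpa using congrFun hε i)
  · push Not at h
    have hsign (i : Fin 3) := (ZMod.neg_eq_self_or_eq_one_or_eq_neg_one (v i)).resolve_left (h i)
    obtain ⟨c, hc, hv⟩ := ZMod.exists_sign_mul_eq (hsign 0) (hsign 1)
    refine ⟨signedPerm (Equiv.swap 0 1) (fun k => if k = 0 ∨ k = 1 then c else 1),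
      isSignedPerm3_signedPerm fun k => ?_, ?_,
      signedPerm_swap_mulVec_eq_self (by rcases hc with rfl | rfl <;> decide) hv⟩
    · split_ifs
      exacts [hc, Or.inl rfl]
    · rw [Ne, signedPerm_eq_one_iff]
      intro ⟨hσ, _⟩
      exact absurd (congr($hσ 0)) (by decide)
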